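/- For every non-edge {x,y} of G (x ≠ y, x - y ∉ S), there is a graph automorphism of G mapping {x,y} to either {0, α^10} or {0, α^14}. -/

import Mathlib

open SimpleGraph

/-- The set of nonzero cubes in a field. -/
def cubes (F : Type) [Field F] : Set F := {s | ∃ x : F, x ≠ 0 ∧ x ^ 3 = s}

/-- The Cayley graph on `F` with connection set the nonzero cubes:
`x ~ y` iff `x - y` is a nonzero cube. -/
def cayley (F : Type) [Field F] : SimpleGraph F :=
  SimpleGraph.fromRel (fun x y => x - y ∈ cubes F)

/-- `v : Fin n → V` is an induced path on `n` vertices in `G`. -/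
def IsInducedPath {V : Type} (G : SimpleGraph V) {n : ℕ} (v : Fin n → V) : Prop :=
  Function.Injective v ∧
    ∀ i j : Fin n, G.Adj (v i) (v j) ↔ (i.val + 1 = j.val ∨ j.val + 1 = i.val)

/-!
Multiplication by a nonzero cube and translations are automorphisms of the cubic Cayley graph,
so the pair `{x, y}` can be moved to `{0, w}` whenever `w / (x - y)` is a cube. In `𝔽₁₆` the
cubes are the fifth roots of unity, so for a non-edge `d = x - y` the element `d ^ 5` is a
primitive cube root of unity, i.e. one of `a ^ 2 + a = (1 + a + a ^ 2) ^ 5` and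
`a ^ 2 + a + 1 = (1 + a ^ 3) ^ 5`; choosing `w` with `w ^ 5 = d ^ 5` makes `w / d` a cube.
-/

section Cubes

variable {F : Type} [Field F]

lemma ne_zero_of_mem_cubes {s : F} (hs : s ∈ cubes F) : s ≠ 0 := by
  obtain ⟨c, hc, rfl⟩ := hs
  exact pow_ne_zero 3 hc

lemma mem_cubes_of_pow_five_eq_one {s : F} (hs : s ^ 5 = 1) : s ∈ cubes F := by
  have hs0 : s ≠ 0 := by rintro rfl; norm_num at hs
  refine ⟨s ^ 2, pow_ne_zero 2 hs0, ?_⟩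
  rw [← pow_mul, show 2 * 3 = 5 + 1 from rfl, pow_succ, hs, one_mul]

lemma mul_mem_cubes {s w : F} (hs : s ∈ cubes F) (hw : w ∈ cubes F) : s * w ∈ cubes F := by
  obtain ⟨c, hc, rfl⟩ := hs
  obtain ⟨e, he, rfl⟩ := hw
  exact ⟨c * e, mul_ne_zero hc he, mul_pow c e 3⟩

lemma inv_mem_cubes {s : F} (hs : s ∈ cubes F) : s⁻¹ ∈ cubes F := by
  obtain ⟨c, hc, rfl⟩ := hs
  exact ⟨c⁻¹, inv_ne_zero hc, inv_pow c 3⟩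

lemma mul_mem_cubes_iff {s w : F} (hs : s ∈ cubes F) : s * w ∈ cubes F ↔ w ∈ cubes F := by
  refine ⟨fun h => ?_, mul_mem_cubes hs⟩
  simpa [inv_mul_cancel_left₀ (ne_zero_of_mem_cubes hs)] using mul_mem_cubes (inv_mem_cubes hs) h

end Cubes

section Automorphisms

variable {F : Type} [Field F]

lemma cayley_adj_iff (x y : F) :
    (cayley F).Adj x y ↔ x ≠ y ∧ (x - y ∈ cubes F ∨ y - x ∈ cubes F) :=
  fromRel_adj _ x y

def cayleyAddRight (t : F) : cayley F ≃g cayley F where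
  toEquiv := Equiv.addRight t
  map_rel_iff' {z₁ z₂} := by
    simp only [Equiv.coe_addRight, cayley_adj_iff, ne_eq, add_left_inj, add_sub_add_right_eq_sub]

def cayleyMulLeft {s : F} (hs : s ∈ cubes F) : cayley F ≃g cayley F where
  toEquiv := Equiv.mulLeft₀ s (ne_zero_of_mem_cubes hs)
  map_rel_iff' {z₁ z₂} := by
    simp only [Equiv.mulLeft₀_apply, cayley_adj_iff, ne_eq,
      mul_right_inj' (ne_zero_of_mem_cubes hs), ← mul_sub, mul_mem_cubes_iff hs]

lemma exists_cayley_iso_apply_eq {x y w : F} (h : w / (x - y) ∈ cubes F) :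
    ∃ θ : cayley F ≃g cayley F, θ x = w ∧ θ y = 0 := by
  have hxy : x - y ≠ 0 := by
    intro hxy
    exact ne_zero_of_mem_cubes h (by rw [hxy, div_zero])
  refine ⟨(cayleyAddRight (-y)).trans (cayleyMulLeft h), ?_, ?_⟩
  · change w / (x - y) * (x + -y) = w
    rw [← sub_eq_add_neg, div_mul_cancel₀ w hxy]
  · change w / (x - y) * (y + -y) = 0
    rw [add_neg_cancel, mul_zero]

end Automorphisms

section FieldOfOrderSixteen

variable {F : Type} [Field F]

lemma two_eq_zero_of_card_eq_sixteen [Fintype F] (hF : Fintype.card F = 16) : (2 : F) = 0 := by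
  have h16 : ((16 : ℕ) : F) = 0 := hF ▸ Nat.cast_card_eq_zero F
  exact pow_eq_zero_iff (n := 4) (by norm_num) |>.mp (by norm_num at h16 ⊢; exact h16)

lemma pow_five_sq_add_pow_five_add_one_eq_zero [Fintype F] (hF : Fintype.card F = 16) {d : F}
    (hd0 : d ≠ 0) (hd : d ∉ cubes F) : (d ^ 5) ^ 2 + d ^ 5 + 1 = 0 := by
  have hd15 : d ^ 15 = 1 := by
    simpa [hF] using FiniteField.pow_card_sub_one_eq_one d hd0
  have hd5 : d ^ 5 - 1 ≠ 0 := sub_ne_zero.mpr fun h => hd (mem_cubes_of_pow_five_eq_one h)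
  refine (mul_eq_zero.mp ?_).resolve_left hd5
  linear_combination hd15

lemma eq_or_eq_of_sq_add_self_add_one_eq_zero (h2 : (2 : F) = 0) {a t : F}
    (ha : a ^ 4 + a + 1 = 0) (ht : t ^ 2 + t + 1 = 0) :
    t = (1 + a + a ^ 2) ^ 5 ∨ t = (1 + a ^ 3) ^ 5 := by
  have hu : (1 + a + a ^ 2) ^ 5 = a ^ 2 + a := by
    linear_combination (a^6 + 5*a^5 + 15*a^4 + 29*a^3 + 39*a^2 + 31*a + 1) * ha
      + (-19*a^3 - 28*a^2 - 14*a) * h2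
  have hv : (1 + a ^ 3) ^ 5 = a ^ 2 + a + 1 := by
    linear_combination (a^11 + 4*a^8 - a^7 + 6*a^5 - 3*a^4 + a^3 + 4*a^2 - 3*a + 2) * ha
      + (-a^2 - 1) * h2
  have hfac : (t - (a ^ 2 + a)) * (t - (a ^ 2 + a + 1)) = 0 := by
    linear_combination ht + ha + (-(1 + a^2 + a) * t + a^3 + a^2 - 1) * h2
  rw [hu, hv]
  exact (mul_eq_zero.mp hfac).imp sub_eq_zero.mp sub_eq_zero.mp

end FieldOfOrderSixteen

theorem stmt12 (F : Type) [Field F] [Fintype F] (hF : Fintype.card F = 16)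
    (a : F) (ha : a ^ 4 + a + 1 = 0)
    (x y : F) (hxy : x ≠ y) (hne : ¬ (cayley F).Adj x y) :
    ∃ θ : cayley F ≃g cayley F,
      ({θ x, θ y} : Set F) = {0, 1 + a + a ^ 2} ∨
      ({θ x, θ y} : Set F) = {0, 1 + a ^ 3} := by
  have hd0 : x - y ≠ 0 := sub_ne_zero.mpr hxy
  have hd : x - y ∉ cubes F := fun h => hne ((cayley_adj_iff x y).mpr ⟨hxy, Or.inl h⟩)
  have move : ∀ w : F, (x - y) ^ 5 = w ^ 5 →
      ∃ θ : cayley F ≃g cayley F, ({θ x, θ y} : Set F) = {0, w} := by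
    intro w hw
    have hcube : w / (x - y) ∈ cubes F :=
      mem_cubes_of_pow_five_eq_one (by rw [div_pow, ← hw, div_self (pow_ne_zero 5 hd0)])
    obtain ⟨θ, hθx, hθy⟩ := exists_cayley_iso_apply_eq hcube
    exact ⟨θ, by rw [hθx, hθy, Set.pair_comm]⟩
  rcases eq_or_eq_of_sq_add_self_add_one_eq_zero (two_eq_zero_of_card_eq_sixteen hF) ha
      (pow_five_sq_add_pow_five_add_one_eq_zero hF hd0 hd) with h | h
  · exact (move _ h).imp fun _ => Or.inl
  · exact (move _ h).imp fun _ => Or.inr
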